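/- Under the Bermudan put recursion with q_m ≥ 0, for each 1 ≤ m ≤ M-1 the equation Ṽ_m(S) = K - S has at most one solution S ∈ (0, ∞). -/

import Mathlib

/-!
Call `f` a put profile if on `(0, ∞)` it is nonnegative, antitone and 1-Lipschitz. The payoff
`max 0 (K - S)` is one, and so is `max (Ṽ S) (K - S)` whenever `Ṽ S = c ∫ f (S z) ρ(z) dz` is the
continuation value of a put profile `f`, provided `c ∫ z ρ(z) dz ≤ 1`; for the lognormal kernel
this quantity is `exp (-2 q τ / σ²)`, so `q ≥ 0` is exactly what is needed. Hence every `V_m` is a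
put profile. For such `f` and `S₁ < S₂` we have `f (S₁ z) - f (S₂ z) ≤ (S₂ - S₁) z`, with strict
inequality for large `z` because `f` is bounded, so `Ṽ S₁ - Ṽ S₂ < S₂ - S₁`. Thus `S ↦ Ṽ S + S`
is strictly increasing and takes the value `K` at most once.
-/

open MeasureTheory

/-- `τ_m = σ_m² (t_m - t_{m-1}) / 2`. -/
noncomputable def tauBS (σ t : ℕ → ℝ) (m : ℕ) : ℝ := (σ m)^2 * (t m - t (m - 1)) / 2

/-- The lognormal density `ρ_m(z,1)` of the Black–Scholes model. -/
noncomputable def rho1BS (r q σ t : ℕ → ℝ) (m : ℕ) (z : ℝ) : ℝ :=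
  1 / (2 * Real.sqrt (Real.pi * tauBS σ t m) * z) *
    Real.exp (-(Real.log z -
      (2 / (σ m)^2) * (r m - q m - (σ m)^2 / 2) * tauBS σ t m)^2 / (4 * tauBS σ t m))

open Set Real ProbabilityTheory
open scoped NNReal

section ChangeOfVariables

variable {E : Type*} [NormedAddCommGroup E] [NormedSpace ℝ E]

theorem integral_exp_smul_comp_exp (g : ℝ → E) : ∫ y, exp y • g (exp y) = ∫ z in Ioi 0, g z := by
  rw [← range_exp, ← image_univ, integral_image_eq_integral_abs_deriv_smul MeasurableSet.univ
    (fun y _ ↦ (hasDerivAt_exp y).hasDerivWithinAt) exp_injective.injOn, setIntegral_univ]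
  simp_rw [abs_of_pos (exp_pos _)]

theorem integrable_exp_smul_comp_exp_iff (g : ℝ → E) :
    Integrable (fun y ↦ exp y • g (exp y)) ↔ IntegrableOn g (Ioi 0) := by
  rw [← range_exp, ← image_univ, integrableOn_image_iff_integrableOn_abs_deriv_smul
    MeasurableSet.univ (fun y _ ↦ (hasDerivAt_exp y).hasDerivWithinAt) exp_injective.injOn,
    integrableOn_univ]
  simp_rw [abs_of_pos (exp_pos _)]

end ChangeOfVariables

lemma integrable_exp_mul_gaussianPDFReal (μ : ℝ) {v : ℝ≥0} (hv : v ≠ 0) :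
    Integrable (fun y ↦ exp y * gaussianPDFReal μ v y) := by
  have h := integrable_exp_mul_gaussianReal (μ := μ) (v := v) 1
  rw [gaussianReal_of_var_ne_zero μ hv, integrable_withDensity_iff_integrable_smul'
    (measurable_gaussianPDF μ v) (ae_of_all _ fun _ ↦ gaussianPDF_lt_top)] at h
  simpa [toReal_gaussianPDF, mul_comm] using h

lemma integral_exp_mul_gaussianPDFReal (μ : ℝ) {v : ℝ≥0} (hv : v ≠ 0) :
    ∫ y, exp y * gaussianPDFReal μ v y = exp (μ + v / 2) := by
  have h := congrFun (mgf_id_gaussianReal (μ := μ) (v := v)) 1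
  rw [mgf, integral_gaussianReal_eq_integral_smul hv] at h
  simpa [mul_comm] using h

noncomputable def lognormalPDFReal (μ : ℝ) (v : ℝ≥0) (z : ℝ) : ℝ := gaussianPDFReal μ v (log z) / z

lemma exp_mul_lognormalPDFReal_exp (μ : ℝ) (v : ℝ≥0) (y : ℝ) :
    exp y * lognormalPDFReal μ v (exp y) = gaussianPDFReal μ v y := by
  rw [lognormalPDFReal, log_exp, mul_div_cancel₀ _ (exp_ne_zero y)]

lemma lognormalPDFReal_pos (μ : ℝ) {v : ℝ≥0} (hv : v ≠ 0) {z : ℝ} (hz : 0 < z) :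
    0 < lognormalPDFReal μ v z :=
  div_pos (gaussianPDFReal_pos μ v _ hv) hz

lemma integrableOn_lognormalPDFReal (μ : ℝ) (v : ℝ≥0) :
    IntegrableOn (lognormalPDFReal μ v) (Ioi 0) := by
  rw [← integrable_exp_smul_comp_exp_iff]
  simpa only [smul_eq_mul, exp_mul_lognormalPDFReal_exp] using integrable_gaussianPDFReal μ v

lemma integrableOn_mul_lognormalPDFReal (μ : ℝ) {v : ℝ≥0} (hv : v ≠ 0) :
    IntegrableOn (fun z ↦ z * lognormalPDFReal μ v z) (Ioi 0) := by
  rw [← integrable_exp_smul_comp_exp_iff]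
  simpa only [smul_eq_mul, mul_left_comm _ (exp _), exp_mul_lognormalPDFReal_exp]
    using integrable_exp_mul_gaussianPDFReal μ hv

lemma setIntegral_mul_lognormalPDFReal (μ : ℝ) {v : ℝ≥0} (hv : v ≠ 0) :
    ∫ z in Ioi 0, z * lognormalPDFReal μ v z = exp (μ + v / 2) := by
  rw [← integral_exp_smul_comp_exp]
  simpa only [smul_eq_mul, mul_left_comm _ (exp _), exp_mul_lognormalPDFReal_exp]
    using integral_exp_mul_gaussianPDFReal μ hv

lemma rho1BS_eq_lognormalPDFReal {r q σ t : ℕ → ℝ} {m : ℕ} (hτ : 0 ≤ tauBS σ t m) :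
    rho1BS r q σ t m = lognormalPDFReal ((2 / (σ m)^2) * (r m - q m - (σ m)^2 / 2) * tauBS σ t m)
      (2 * tauBS σ t m).toNNReal := by
  ext z
  rw [rho1BS, lognormalPDFReal, gaussianPDFReal, Real.coe_toNNReal _ (by positivity)]
  have : √(2 * π * (2 * tauBS σ t m)) = 2 * √(π * tauBS σ t m) := by
    rw [show 2 * π * (2 * tauBS σ t m) = 2 ^ 2 * (π * tauBS σ t m) by ring,
      sqrt_mul (by positivity), sqrt_sq two_pos.le]
  rw [this]
  ring_nf

structure IsPutProfile (f : ℝ → ℝ) : Prop where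
  nonneg : ∀ S ∈ Ioi 0, 0 ≤ f S
  antitoneOn : AntitoneOn f (Ioi 0)
  lipschitzOnWith : LipschitzOnWith 1 f (Ioi 0)

lemma isPutProfile_zero : IsPutProfile fun _ ↦ 0 :=
  ⟨fun _ _ ↦ le_rfl, antitoneOn_const, (LipschitzWith.const' 0).lipschitzOnWith⟩

namespace IsPutProfile

variable {f : ℝ → ℝ}

lemma congr (hf : IsPutProfile f) {g : ℝ → ℝ} (hfg : EqOn f g (Ioi 0)) : IsPutProfile g where
  nonneg S hS := hfg hS ▸ hf.nonneg S hS
  antitoneOn := hf.antitoneOn.congr hfg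
  lipschitzOnWith x hx y hy := by rw [← hfg hx, ← hfg hy]; exact hf.lipschitzOnWith hx hy

lemma sub_le (hf : IsPutProfile f) {S₁ S₂ : ℝ} (h₁ : 0 < S₁) (h₁₂ : S₁ ≤ S₂) :
    f S₁ - f S₂ ≤ S₂ - S₁ := by
  have := hf.lipschitzOnWith.le_add_mul h₁ (h₁.trans_le h₁₂ : S₂ ∈ Ioi 0)
  rw [NNReal.coe_one, one_mul, dist_comm, dist_eq, abs_of_nonneg (sub_nonneg.2 h₁₂)] at this
  linarith

lemma le_add_one (hf : IsPutProfile f) {S : ℝ} (hS : 0 < S) : f S ≤ f 1 + 1 := by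
  rcases le_total S 1 with h | h
  · linarith [hf.sub_le hS h]
  · linarith [hf.antitoneOn (mem_Ioi.2 one_pos) (mem_Ioi.2 hS) h]

lemma max_sub (hf : IsPutProfile f) (K : ℝ) : IsPutProfile fun S ↦ max (f S) (K - S) where
  nonneg S hS := (hf.nonneg S hS).trans (le_max_left _ _)
  antitoneOn _ hx _ hy hxy := max_le_max (hf.antitoneOn hx hy hxy) (by linarith)
  lipschitzOnWith := LipschitzOnWith.of_le_add fun x hx y hy ↦ by
    have h₁ := hf.lipschitzOnWith.le_add_mul hx hy
    have h₂ : K - x ≤ K - y + dist x y := by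
      rw [dist_comm, dist_eq]; linarith [le_abs_self (y - x)]
    rw [NNReal.coe_one, one_mul] at h₁
    exact max_le (h₁.trans (by gcongr; exact le_max_left _ _))
      (h₂.trans (by gcongr; exact le_max_right _ _))

lemma integrableOn_comp_mul_mul (hf : IsPutProfile f) {ρ : ℝ → ℝ} (hρ : IntegrableOn ρ (Ioi 0))
    {S : ℝ} (hS : 0 < S) : IntegrableOn (fun z ↦ f (S * z) * ρ z) (Ioi 0) := by
  have hcont : ContinuousOn (fun z ↦ f (S * z)) (Ioi 0) :=
    hf.lipschitzOnWith.continuousOn.comp (continuousOn_const.mul continuousOn_id)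
      fun z hz ↦ mul_pos hS hz
  refine hρ.bdd_mul (hcont.aestronglyMeasurable measurableSet_Ioi) (c := f 1 + 1) ?_
  filter_upwards [ae_restrict_mem measurableSet_Ioi] with z hz
  have hSz : 0 < S * z := mul_pos hS hz
  rw [norm_of_nonneg (hf.nonneg _ hSz)]
  exact hf.le_add_one hSz

end IsPutProfile

/-- `c * ρ z` is the discounted density of the one-period growth factor `z = S_m / S_{m-1}` of
the stock; the last field says that the discounted stock price is a supermartingale. -/
structure IsSupermartingaleKernel (c : ℝ) (ρ : ℝ → ℝ) : Prop where
  pos : ∀ z ∈ Ioi 0, 0 < ρ z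
  integrableOn : IntegrableOn ρ (Ioi 0)
  integrableOn_mul : IntegrableOn (fun z ↦ z * ρ z) (Ioi 0)
  discount_pos : 0 < c
  discounted_mean_le_one : c * ∫ z in Ioi 0, z * ρ z ≤ 1

noncomputable def continuationValue (c : ℝ) (ρ f : ℝ → ℝ) (S : ℝ) : ℝ :=
  c * ∫ z in Ioi 0, f (S * z) * ρ z

namespace IsPutProfile

variable {f ρ : ℝ → ℝ} {c : ℝ}

lemma continuationValue_nonneg (hf : IsPutProfile f) (hk : IsSupermartingaleKernel c ρ)
    {S : ℝ} (hS : 0 < S) : 0 ≤ continuationValue c ρ f S :=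
  mul_nonneg hk.discount_pos.le <| setIntegral_nonneg measurableSet_Ioi fun z hz ↦
    mul_nonneg (hf.nonneg _ (mul_pos hS hz)) (hk.pos z hz).le

lemma continuationValue_antitoneOn (hf : IsPutProfile f) (hk : IsSupermartingaleKernel c ρ) :
    AntitoneOn (continuationValue c ρ f) (Ioi 0) := by
  intro S₁ (hS₁ : 0 < S₁) S₂ (hS₂ : 0 < S₂) h
  refine mul_le_mul_of_nonneg_left ?_ hk.discount_pos.le
  refine setIntegral_mono_on (hf.integrableOn_comp_mul_mul hk.integrableOn hS₂)
    (hf.integrableOn_comp_mul_mul hk.integrableOn hS₁) measurableSet_Ioi fun z hz ↦ ?_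
  have hSz : f (S₂ * z) ≤ f (S₁ * z) := hf.antitoneOn (mem_Ioi.2 (mul_pos hS₁ hz))
    (mem_Ioi.2 (mul_pos hS₂ hz)) (mul_le_mul_of_nonneg_right h (le_of_lt hz))
  exact mul_le_mul_of_nonneg_right hSz (hk.pos z hz).le

lemma strictMonoOn_continuationValue_add (hf : IsPutProfile f)
    (hk : IsSupermartingaleKernel c ρ) :
    StrictMonoOn (fun S ↦ continuationValue c ρ f S + S) (Ioi 0) := by
  intro S₁ (hS₁ : 0 < S₁) S₂ (hS₂ : 0 < S₂) h
  set D := S₂ - S₁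
  have hD : 0 < D := sub_pos.2 h
  have hI₁ := hf.integrableOn_comp_mul_mul hk.integrableOn hS₁
  have hI₂ := hf.integrableOn_comp_mul_mul hk.integrableOn hS₂
  have hIz := hk.integrableOn_mul.const_mul D
  have hI₁₂ : IntegrableOn (fun z ↦ f (S₁ * z) * ρ z - f (S₂ * z) * ρ z) (Ioi 0) := hI₁.sub hI₂
  set gap := fun z ↦ D * (z * ρ z) - (f (S₁ * z) * ρ z - f (S₂ * z) * ρ z)
  have gap_nonneg : ∀ z ∈ Ioi 0, 0 ≤ gap z := fun z hz ↦ by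
    have := hf.sub_le (mul_pos hS₁ hz) (mul_le_mul_of_nonneg_right h.le (le_of_lt hz))
    have := (hk.pos z hz).le
    simp only [gap]; nlinarith
  -- for large `z` the bound `f ≤ f 1 + 1` beats the Lipschitz bound `D * z`
  have gap_pos : ∀ z, max 0 ((f 1 + 1) / D) < z → 0 < gap z := fun z hz ↦ by
    have hz₀ : 0 < z := (le_max_left _ _).trans_lt hz
    have hzD : f 1 + 1 < D * z := by
      have := (le_max_right _ _).trans_lt hz
      rwa [div_lt_iff₀ hD, mul_comm] at this
    have := hf.le_add_one (mul_pos hS₁ hz₀)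
    have := hf.nonneg _ (mul_pos hS₂ hz₀)
    have := hk.pos z hz₀
    simp only [gap]; nlinarith
  have hgap : 0 < ∫ z in Ioi 0, gap z := by
    rw [setIntegral_pos_iff_support_of_nonneg_ae
      ((ae_restrict_iff' measurableSet_Ioi).2 (ae_of_all _ gap_nonneg)) (hIz.sub hI₁₂)]
    have hsub : Ioi (max 0 ((f 1 + 1) / D)) ⊆ Function.support gap ∩ Ioi 0 := fun z hz ↦
      ⟨(gap_pos z hz).ne', mem_Ioi.2 ((le_max_left _ _).trans_lt hz)⟩
    exact lt_of_lt_of_le (by simp) (measure_mono hsub)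
  simp only [gap] at hgap
  rw [integral_sub hIz hI₁₂, integral_sub hI₁ hI₂, integral_const_mul] at hgap
  have hc := hk.discount_pos
  have hm := hk.discounted_mean_le_one
  simp only [continuationValue, D] at hgap ⊢
  nlinarith

lemma continuationValue_isPutProfile (hf : IsPutProfile f) (hk : IsSupermartingaleKernel c ρ) :
    IsPutProfile (continuationValue c ρ f) where
  nonneg S hS := hf.continuationValue_nonneg hk hS
  antitoneOn := hf.continuationValue_antitoneOn hk
  lipschitzOnWith := LipschitzOnWith.of_le_add fun x hx y hy ↦ by
    rcases lt_or_ge x y with hxy | hyx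
    · have := hf.strictMonoOn_continuationValue_add hk hx hy hxy
      simp only at this
      rw [dist_comm, dist_eq, abs_of_pos (sub_pos.2 hxy)]
      linarith
    · linarith [hf.continuationValue_antitoneOn hk hy hx hyx, dist_nonneg (x := x) (y := y)]

end IsPutProfile

lemma tauBS_pos {σ t : ℕ → ℝ} {m : ℕ} (hσ : σ m ≠ 0) (ht : t (m - 1) < t m) :
    0 < tauBS σ t m := by
  have := sub_pos.2 ht
  unfold tauBS; positivity

lemma isSupermartingaleKernel_rho1BS {r q σ t : ℕ → ℝ} {m : ℕ} (hσ : σ m ≠ 0)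
    (ht : t (m - 1) < t m) (hq : 0 ≤ q m) :
    IsSupermartingaleKernel (exp (-2 * r m * tauBS σ t m / σ m ^ 2)) (rho1BS r q σ t m) := by
  have hτ := tauBS_pos hσ ht
  have hv : (2 * tauBS σ t m).toNNReal ≠ 0 := by simpa using hτ
  rw [rho1BS_eq_lognormalPDFReal hτ.le]
  refine ⟨fun z hz ↦ lognormalPDFReal_pos _ hv hz, integrableOn_lognormalPDFReal _ _,
    integrableOn_mul_lognormalPDFReal _ hv, exp_pos _, ?_⟩
  rw [setIntegral_mul_lognormalPDFReal _ hv, Real.coe_toNNReal _ (by positivity), ← exp_add,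
    exp_le_one_iff]
  have hexp : -2 * r m * tauBS σ t m / σ m ^ 2 +
      (2 / σ m ^ 2 * (r m - q m - σ m ^ 2 / 2) * tauBS σ t m + 2 * tauBS σ t m / 2) =
      -(2 * (q m * tauBS σ t m / σ m ^ 2)) := by
    field_simp; ring
  rw [hexp, neg_nonpos]
  positivity

theorem stmt7_general (M : ℕ) (K : ℝ) (t r q σ : ℕ → ℝ)
    (hq : ∀ m, 1 ≤ m → m ≤ M → 0 ≤ q m) (hσ : ∀ m, 0 < σ m)
    (ht : ∀ m, 1 ≤ m → m ≤ M → t (m - 1) < t m)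
    (V Vt : ℕ → ℝ → ℝ)
    (hVM : ∀ S : ℝ, V M S = max 0 (K - S))
    (hVt : ∀ m, 1 ≤ m → m ≤ M → ∀ S : ℝ, 0 < S →
      Vt (m - 1) S = Real.exp (-2 * r m * tauBS σ t m / (σ m)^2) *
        ∫ z in Set.Ioi (0:ℝ), V m (S * z) * rho1BS r q σ t m z)
    (hV : ∀ m, 1 ≤ m → m ≤ M → ∀ S : ℝ, 0 < S →
      V (m - 1) S = max (Vt (m - 1) S) (K - S)) :
    ∀ m, 1 ≤ m → m ≤ M - 1 → ∀ S1 S2 : ℝ, 0 < S1 → 0 < S2 →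
      Vt m S1 = K - S1 → Vt m S2 = K - S2 → S1 = S2 := by
  intro m hm1 hm2 S1 S2 hS1 hS2 hE1 hE2
  have hkernel : ∀ j < M, IsSupermartingaleKernel
      (exp (-2 * r (j + 1) * tauBS σ t (j + 1) / σ (j + 1) ^ 2)) (rho1BS r q σ t (j + 1)) :=
    fun j hj ↦ isSupermartingaleKernel_rho1BS (hσ _).ne' (ht _ (by omega) hj) (hq _ (by omega) hj)
  have hVt' : ∀ j < M, EqOn (Vt j) (continuationValue _ _ (V (j + 1))) (Ioi 0) :=
    fun j hj S hS ↦ hVt (j + 1) (by omega) hj S hS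
  have hV' : ∀ j < M, ∀ S > 0, V j S = max (Vt j S) (K - S) :=
    fun j hj S hS ↦ hV (j + 1) (by omega) hj S hS
  have hprofile : ∀ j ≤ M, IsPutProfile (V j) := by
    intro j hj
    induction hj using Nat.decreasingInduction with
    | self => exact (isPutProfile_zero.max_sub K).congr fun S _ ↦ (hVM S).symm
    | of_succ j hj ih =>
      refine ((ih.continuationValue_isPutProfile (hkernel j hj)).max_sub K).congr fun S hS ↦ ?_
      rw [hV' j hj S hS, hVt' j hj hS]
  refine ((hprofile (m + 1) (by omega)).strictMonoOn_continuationValue_add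
    (hkernel m (by omega))).injOn hS1 hS2 ?_
  simp only [← hVt' m (by omega) hS1, ← hVt' m (by omega) hS2, hE1, hE2, sub_add_cancel]

/-- Under the Bermudan put recursion with `q_m ≥ 0`, for each `1 ≤ m ≤ M-1`
the equation `Ṽ_m(S) = K - S` has at most one solution `S ∈ (0,∞)`. -/
theorem stmt7 (M : ℕ) (hM : 2 ≤ M) (K : ℝ) (hK : 0 < K) (t r q σ : ℕ → ℝ)
    (hq : ∀ m, 1 ≤ m → m ≤ M → 0 ≤ q m) (hσ : ∀ m, 0 < σ m)
    (ht : ∀ m, 1 ≤ m → m ≤ M → t (m - 1) < t m)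
    (V Vt : ℕ → ℝ → ℝ)
    (hVM : ∀ S : ℝ, V M S = max 0 (K - S))
    (hVt : ∀ m, 1 ≤ m → m ≤ M → ∀ S : ℝ, 0 < S →
      Vt (m - 1) S = Real.exp (-2 * r m * tauBS σ t m / (σ m)^2) *
        ∫ z in Set.Ioi (0:ℝ), V m (S * z) * rho1BS r q σ t m z)
    (hV : ∀ m, 1 ≤ m → m ≤ M → ∀ S : ℝ, 0 < S →
      V (m - 1) S = max (Vt (m - 1) S) (K - S)) :
    ∀ m, 1 ≤ m → m ≤ M - 1 → ∀ S1 S2 : ℝ, 0 < S1 → 0 < S2 →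
      Vt m S1 = K - S1 → Vt m S2 = K - S2 → S1 = S2 :=
  stmt7_general M K t r q σ hq hσ ht V Vt hVM hVt hV
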